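/- arXiv:2107.13444 — 2 statements merged into one kernel-verified Lean document; each statement's English description precedes it below -/
import Mathlib

section
/- Let n, N ≥ 1, let C ∈ ℝ^{n×n} be symmetric positive semidefinite, and for each i = 1,…,N let g_i : ℝ^n → ℝ be convex and differentiable. Define, for u = (u_1,…,u_N) ∈ (ℝ^n)^N, the cost J_i(u) = g_i(u_i) + ⟨C · (1/N)∑_{j=1}^N u_j, u_i⟩, whose gradient with respect to u_i is F_i(u) = ∇g_i(u_i) + (1/N) C ∑_{j=1}^N u_j + (1/N) C u_i. Then the pseudo-gradient map F = (F_1,…,F_N) : (ℝ^n)^N → (ℝ^n)^N is monotone, i.e., for all x, y ∈ (ℝ^n)^N, ∑_{i=1}^N ⟨F_i(x) − F_i(y), x_i − y_i⟩ ≥ 0. -/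
open scoped RealInnerProductSpace

/-- Compare the monotone derivative of the convex function `t ↦ f (lineMap y x t)`
at `t = 0` and `t = 1`. -/
theorem ConvexOn.fderiv_apply_sub_le {E : Type*} [NormedAddCommGroup E] [NormedSpace ℝ E]
    {f : E → ℝ} (hconv : ConvexOn ℝ Set.univ f) (hdiff : Differentiable ℝ f) (x y : E) :
    fderiv ℝ f y (x - y) ≤ fderiv ℝ f x (x - y) := by
  have hderiv : ∀ t : ℝ, HasDerivAt (f ∘ AffineMap.lineMap y x)
      (fderiv ℝ f (AffineMap.lineMap y x t) (x - y)) t := fun t =>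
    (hdiff _).hasFDerivAt.comp_hasDerivAt t AffineMap.hasDerivAt_lineMap
  have hmono := (hconv.comp_affineMap (AffineMap.lineMap y x)).monotoneOn_deriv
    fun t _ => (hderiv t).differentiableAt
  have h01 := hmono (Set.mem_univ 0) (Set.mem_univ 1) zero_le_one
  rwa [(hderiv 0).deriv, (hderiv 1).deriv, AffineMap.lineMap_apply_zero,
    AffineMap.lineMap_apply_one] at h01

theorem ConvexOn.inner_gradient_sub_nonneg {E : Type*} [NormedAddCommGroup E]
    [InnerProductSpace ℝ E] [CompleteSpace E] {f : E → ℝ} (hconv : ConvexOn ℝ Set.univ f)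
    (hdiff : Differentiable ℝ f) (x y : E) :
    0 ≤ ⟪gradient f x - gradient f y, x - y⟫ := by
  rw [inner_sub_left, inner_gradient_left, inner_gradient_left, sub_nonneg]
  exact hconv.fderiv_apply_sub_le hdiff x y

/-- The coupling part of the pseudo-gradient is monotone: summing over `i` turns the first
term into the quadratic form of `T` at `∑ i, d i`. -/
theorem LinearMap.IsPositive.sum_inner_apply_sum_add_apply_nonneg {E ι : Type*}
    [NormedAddCommGroup E] [InnerProductSpace ℝ E] [Fintype ι] {T : E →ₗ[ℝ] E}
    (hT : T.IsPositive) (d : ι → E) :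
    0 ≤ ∑ i, ⟪T (∑ j, d j) + T (d i), d i⟫ := by
  simp only [inner_add_left, Finset.sum_add_distrib, ← inner_sum]
  exact add_nonneg (hT.inner_nonneg_left _)
    (Finset.sum_nonneg fun i _ => hT.inner_nonneg_left (d i))

theorem aggregative_pseudogradient_monotone_general
    (n N : ℕ)
    (C : Matrix (Fin n) (Fin n) ℝ) (hC : C.PosSemidef)
    (g : Fin N → EuclideanSpace ℝ (Fin n) → ℝ)
    (hgcvx : ∀ i, ConvexOn ℝ Set.univ (g i))
    (hgdiff : ∀ i, Differentiable ℝ (g i))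
    (F : (Fin N → EuclideanSpace ℝ (Fin n)) → Fin N → EuclideanSpace ℝ (Fin n))
    (hF : ∀ u i, F u i = gradient (g i) (u i)
      + (N : ℝ)⁻¹ • Matrix.toEuclideanLin C (∑ j, u j)
      + (N : ℝ)⁻¹ • Matrix.toEuclideanLin C (u i)) :
    ∀ x y : Fin N → EuclideanSpace ℝ (Fin n),
      0 ≤ ∑ i, ⟪F x i - F y i, x i - y i⟫ := by
  intro x y
  set T := Matrix.toEuclideanLin C
  have hsplit : ∀ i, ⟪F x i - F y i, x i - y i⟫
      = ⟪gradient (g i) (x i) - gradient (g i) (y i), x i - y i⟫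
        + (N : ℝ)⁻¹ * ⟪T (∑ j, (x - y) j) + T ((x - y) i), (x - y) i⟫ := by
    intro i
    have hFsub : F x i - F y i = (gradient (g i) (x i) - gradient (g i) (y i))
        + (N : ℝ)⁻¹ • (T (∑ j, (x - y) j) + T ((x - y) i)) := by
      simp only [hF, Pi.sub_apply, Finset.sum_sub_distrib, map_sub, smul_add, smul_sub]
      abel
    rw [hFsub, inner_add_left, real_inner_smul_left, Pi.sub_apply]
  rw [Finset.sum_congr rfl fun i _ => hsplit i, Finset.sum_add_distrib, ← Finset.mul_sum]
  have hgrad : 0 ≤ ∑ i, ⟪gradient (g i) (x i) - gradient (g i) (y i), x i - y i⟫ :=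
    Finset.sum_nonneg fun i _ => (hgcvx i).inner_gradient_sub_nonneg (hgdiff i) (x i) (y i)
  have hcoupling :=
    (Matrix.isPositive_toEuclideanLin_iff.2 hC).sum_inner_apply_sum_add_apply_nonneg (x - y)
  exact add_nonneg hgrad (mul_nonneg (by positivity) hcoupling)

/-- Monotonicity of the pseudo-gradient of an aggregative game whose cost
functions are `J_i(u) = g_i(u_i) + ⟨C · avg(u), u_i⟩` with `C` symmetric
positive semidefinite and `g_i` convex and differentiable; the gradient of
`J_i` with respect to `u_i` is
`F_i(u) = ∇g_i(u_i) + (1/N) C ∑_j u_j + (1/N) C u_i`. -/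
theorem aggregative_pseudogradient_monotone
    (n N : ℕ) (hn : 1 ≤ n) (hN : 1 ≤ N)
    (C : Matrix (Fin n) (Fin n) ℝ) (hC : C.PosSemidef)
    (g : Fin N → EuclideanSpace ℝ (Fin n) → ℝ)
    (hgcvx : ∀ i, ConvexOn ℝ Set.univ (g i))
    (hgdiff : ∀ i, Differentiable ℝ (g i))
    (F : (Fin N → EuclideanSpace ℝ (Fin n)) → Fin N → EuclideanSpace ℝ (Fin n))
    (hF : ∀ u i, F u i = gradient (g i) (u i)
      + (N : ℝ)⁻¹ • Matrix.toEuclideanLin C (∑ j, u j)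
      + (N : ℝ)⁻¹ • Matrix.toEuclideanLin C (u i)) :
    ∀ x y : Fin N → EuclideanSpace ℝ (Fin n),
      0 ≤ ∑ i, ⟪F x i - F y i, x i - y i⟫ :=
  aggregative_pseudogradient_monotone_general n N C hC g hgcvx hgdiff F hF
end

section
/- Let H, N ≥ 1, let d ∈ ℝ^H with d_h ≥ 0 for all h, let b ∈ ℝ^H, and let D = diag(d₁,…,d_H). For (p_1,…,p_N) ∈ (ℝ^H)^N, define F_i(p_1,…,p_N) = D(∑_{j=1}^N p_j + b) + D p_i, which is the gradient with respect to p_i of the grid-trading cost f_i^{mg}(p_i, σ) = ∑_{h=1}^H d_h (σ_h + b_h) p_{i,h} with σ = ∑_{j=1}^N p_j. Then the map (p_1,…,p_N) ↦ (F_1,…,F_N) is monotone: for all p, q ∈ (ℝ^H)^N, ∑_{i=1}^N ⟨F_i(p) − F_i(q), p_i − q_i⟩ ≥ 0. -/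
open scoped RealInnerProductSpace

section

variable {ι E : Type*} [Fintype ι] [NormedAddCommGroup E] [InnerProductSpace ℝ E]

def gridPseudoGradient (D : E →ₗ[ℝ] E) (b : E) (p : ι → E) (i : ι) : E :=
  D (∑ j, p j + b) + D (p i)

theorem gridPseudoGradient_sub (D : E →ₗ[ℝ] E) (b : E) (p q : ι → E) (i : ι) :
    gridPseudoGradient D b p i - gridPseudoGradient D b q i =
      D (∑ j, (p j - q j)) + D (p i - q i) := by
  simp only [gridPseudoGradient, Finset.sum_sub_distrib, map_sub, map_add]
  abel

theorem gridPseudoGradient_monotone {D : E →ₗ[ℝ] E} (hD : ∀ x, 0 ≤ ⟪D x, x⟫) (b : E)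
    (p q : ι → E) :
    0 ≤ ∑ i, ⟪gridPseudoGradient D b p i - gridPseudoGradient D b q i, p i - q i⟫ := by
  set u := fun i => p i - q i
  calc (0 : ℝ) ≤ ⟪D (∑ j, u j), ∑ j, u j⟫ + ∑ i, ⟪D (u i), u i⟫ :=
        add_nonneg (hD _) (Finset.sum_nonneg fun i _ => hD _)
    _ = _ := by
        simp only [gridPseudoGradient_sub, inner_add_left, Finset.sum_add_distrib, inner_sum, u]

end

theorem inner_toEuclideanLin_diagonal_self_nonneg {n : Type*} [Fintype n] [DecidableEq n]
    {d : n → ℝ} (hd : ∀ h, 0 ≤ d h) (x : EuclideanSpace ℝ n) :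
    0 ≤ ⟪Matrix.toEuclideanLin (Matrix.diagonal d) x, x⟫ :=
  (Matrix.isPositive_toEuclideanLin_iff.mpr
    (Matrix.posSemidef_diagonal_iff.mpr hd)).re_inner_nonneg_left x

theorem grid_trading_pseudogradient_monotone_general
    (H N : ℕ)
    (d : Fin H → ℝ) (hd : ∀ h, 0 ≤ d h)
    (b : EuclideanSpace ℝ (Fin H))
    (F : (Fin N → EuclideanSpace ℝ (Fin H)) → Fin N → EuclideanSpace ℝ (Fin H))
    (hF : ∀ p i, F p i =
      Matrix.toEuclideanLin (Matrix.diagonal d) ((∑ j, p j) + b)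
      + Matrix.toEuclideanLin (Matrix.diagonal d) (p i)) :
    ∀ p q : Fin N → EuclideanSpace ℝ (Fin H),
      0 ≤ ∑ i, ⟪F p i - F q i, p i - q i⟫ := by
  obtain rfl : F = gridPseudoGradient (Matrix.toEuclideanLin (Matrix.diagonal d)) b :=
    funext fun p => funext (hF p)
  exact gridPseudoGradient_monotone (inner_toEuclideanLin_diagonal_self_nonneg hd) b

/-- Monotonicity of the pseudo-gradient of the grid-trading costs
`f_i^{mg}(p_i, σ) = ∑_h d_h (σ_h + b_h) p_{i,h}` with `σ = ∑_j p_j`,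
whose gradient in `p_i` is `F_i(p) = D(∑_j p_j + b) + D p_i`, `D = diag(d)`. -/
theorem grid_trading_pseudogradient_monotone
    (H N : ℕ) (hH : 1 ≤ H) (hN : 1 ≤ N)
    (d : Fin H → ℝ) (hd : ∀ h, 0 ≤ d h)
    (b : EuclideanSpace ℝ (Fin H))
    (F : (Fin N → EuclideanSpace ℝ (Fin H)) → Fin N → EuclideanSpace ℝ (Fin H))
    (hF : ∀ p i, F p i =
      Matrix.toEuclideanLin (Matrix.diagonal d) ((∑ j, p j) + b)
      + Matrix.toEuclideanLin (Matrix.diagonal d) (p i)) :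
    ∀ p q : Fin N → EuclideanSpace ℝ (Fin H),
      0 ≤ ∑ i, ⟪F p i - F q i, p i - q i⟫ :=
  grid_trading_pseudogradient_monotone_general H N d hd b F hF
end
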